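/- Let j ≥ 1 be an integer and let k and r be positive integers with p(j) | k. Then Σ_{d | r, (d,k)=1} (μ²(d)/φ_j(d)) 𝔖_{j+1}(dk) = 𝔖_{j+1}(rk). -/

import Mathlib

/-!
Write `𝔖_{j+1}(n) = [p(j+1) ∣ n] · C_{j+1} · ∏_{p ∣ n} ℓ(p)` with `ℓ = localFactor (j + 1)`. The
squarefree `d ∣ r` coprime to `k` are the products of the subsets `s` of the set `P` of primes
dividing `r` but not `k`, and `p(j+1) ∣ dk` holds exactly when `p(j+1) ∣ rk` and `j + 1 ∉ P \ s`.
Hence the sum is `[p(j+1) ∣ rk] · C_{j+1} · ∏_{p ∣ k} ℓ(p)` times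
`∏_{p ∈ P} (ℓ(p)/(p - j) + [p ≠ j + 1])`, and each factor of the last product is `ℓ(p)`, because
no `p ∈ P` equals `j` when `p(j) ∣ k`.
-/

open Finset

/-- `p(j) = j` if `j` is prime, and `1` otherwise. -/
def pFun (j : ℕ) : ℕ := if j.Prime then j else 1

/-- `φ_j(n) = ∏_{p ∣ n} (p - j)`, the multiplicative extension of `φ_j(p) = p - j`
to squarefree numbers (as a real number). -/
noncomputable def phij (j n : ℕ) : ℝ := ∏ p ∈ n.primeFactors, ((p : ℝ) - (j : ℝ))

/-- `H_j(n) = ∏_{p ∣ n, p ≠ j-1, p ≠ j} (1 + 1/(p - j))`. -/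
noncomputable def Hj (j n : ℕ) : ℝ :=
  ∏ p ∈ n.primeFactors.filter (fun p => p ≠ j - 1 ∧ p ≠ j), (1 + 1 / ((p : ℝ) - (j : ℝ)))

/-- `G_j(n) = ∏_{p ∣ n, p = j-1 or p = j} p/(p-1)`. -/
noncomputable def Gj (j n : ℕ) : ℝ :=
  ∏ p ∈ n.primeFactors.filter (fun p => p = j - 1 ∨ p = j), ((p : ℝ) / ((p : ℝ) - 1))

/-- `C_j = ∏_{p ≠ j-1, p ≠ j} (1 - (j-1)/((p-1)(p-j+1)))`. -/
noncomputable def Cj (j : ℕ) : ℝ :=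
  ∏' p : Nat.Primes,
    if (p : ℕ) ≠ j - 1 ∧ (p : ℕ) ≠ j then
      1 - ((j : ℝ) - 1) / ((((p : ℕ) : ℝ) - 1) * (((p : ℕ) : ℝ) - (j : ℝ) + 1))
    else 1

/-- The singular series `𝔖_j(n) = C_j G_j(n) H_j(n)` if `p(j) ∣ n`, and `0` otherwise. -/
noncomputable def SSj (j n : ℕ) : ℝ := if pFun j ∣ n then Cj j * Gj j n * Hj j n else 0

namespace Nat

lemma squarefree_prod_of_forall_prime {s : Finset ℕ} (hs : ∀ p ∈ s, p.Prime) :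
    Squarefree (∏ p ∈ s, p) :=
  Finset.squarefree_prod_of_pairwise_isCoprime
    (fun p hp q hq hpq => coprime_iff_isRelPrime.mp <| (coprime_primes (hs p hp) (hs q hq)).mpr hpq)
    fun p hp => (hs p hp).squarefree

lemma sum_divisors_filter_coprime_squarefree {M : Type*} [AddCommMonoid M] (f : ℕ → M)
    {r k : ℕ} (hr : r ≠ 0) (hk : k ≠ 0) :
    ∑ d ∈ r.divisors with d.Coprime k ∧ Squarefree d, f d
      = ∑ s ∈ (r.primeFactors \ k.primeFactors).powerset, f (∏ p ∈ s, p) := by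
  have prime_of_mem {s} (hs : s ⊆ r.primeFactors \ k.primeFactors) :
      ∀ p ∈ s, p.Prime := fun p hp => prime_of_mem_primeFactors (mem_sdiff.mp (hs hp)).1
  refine sum_nbij' primeFactors (fun s => ∏ p ∈ s, p) ?_ ?_ ?_ ?_ ?_
  · intro d hd
    simp only [mem_filter, mem_divisors] at hd
    obtain ⟨⟨hdr, -⟩, hdk, -⟩ := hd
    have hd0 : d ≠ 0 := ne_zero_of_dvd_ne_zero hr hdr
    simpa [Finset.subset_sdiff, primeFactors_mono hdr hr, disjoint_primeFactors hd0 hk]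
  · intro s hs
    rw [mem_powerset] at hs
    have hs0 : ∏ p ∈ s, p ≠ 0 := prod_ne_zero_iff.mpr fun p hp => (prime_of_mem hs p hp).ne_zero
    simp only [mem_filter, mem_divisors]
    refine ⟨⟨?_, hr⟩, ?_, squarefree_prod_of_forall_prime (prime_of_mem hs)⟩
    · exact prod_primes_dvd r (fun p hp => (prime_of_mem hs p hp).prime)
        fun p hp => dvd_of_mem_primeFactors (mem_sdiff.mp (hs hp)).1
    · rw [← disjoint_primeFactors hs0 hk, primeFactors_prod (prime_of_mem hs)]
      exact (Finset.subset_sdiff.mp hs).2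
  · intro d hd
    exact prod_primeFactors_of_squarefree (mem_filter.mp hd).2.2
  · intro s hs
    exact primeFactors_prod (prime_of_mem (mem_powerset.mp hs))
  · intro d hd
    rw [prod_primeFactors_of_squarefree (mem_filter.mp hd).2.2]

lemma sum_divisors_filter_coprime_moebius_sq_mul {R : Type*} [CommRing R] (f : ℕ → R)
    {r k : ℕ} (hr : r ≠ 0) (hk : k ≠ 0) :
    ∑ d ∈ r.divisors with d.Coprime k, ((ArithmeticFunction.moebius d : ℤ) : R) ^ 2 * f d
      = ∑ s ∈ (r.primeFactors \ k.primeFactors).powerset, f (∏ p ∈ s, p) := by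
  simp_rw [← Int.cast_pow, ArithmeticFunction.moebius_sq, apply_ite (Int.cast : ℤ → R),
    Int.cast_one, Int.cast_zero, ite_mul, one_mul, zero_mul]
  rw [← sum_filter, filter_filter, sum_divisors_filter_coprime_squarefree f hr hk]

end Nat

noncomputable def localFactor (i p : ℕ) : ℝ :=
  if p = i - 1 ∨ p = i then (p : ℝ) / ((p : ℝ) - 1) else 1 + 1 / ((p : ℝ) - (i : ℝ))

lemma Gj_mul_Hj (i n : ℕ) : Gj i n * Hj i n = ∏ p ∈ n.primeFactors, localFactor i p := by
  rw [← prod_filter_mul_prod_filter_not n.primeFactors (fun p => p = i - 1 ∨ p = i)]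
  simp only [not_or, Gj, Hj]
  congr 1 <;> refine prod_congr rfl fun p hp => ?_ <;> simp_all [localFactor]

lemma SSj_eq_ite_mul (i n : ℕ) :
    SSj i n = (if pFun i ∣ n then 1 else 0) * Cj i * ∏ p ∈ n.primeFactors, localFactor i p := by
  rw [SSj, mul_assoc (Cj i), Gj_mul_Hj]
  split_ifs <;> ring

lemma localFactor_succ_div_add_ite {j p : ℕ} (hp : p ≠ j) :
    localFactor (j + 1) p / ((p : ℝ) - j) + (if p = j + 1 then 0 else 1)
      = localFactor (j + 1) p := by
  have hpj : (p : ℝ) - j ≠ 0 := sub_ne_zero.mpr (by exact_mod_cast hp)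
  by_cases hp1 : p = j + 1
  · subst hp1
    push_cast
    simp
  · have hpj1 : (p : ℝ) - (j + 1) ≠ 0 := sub_ne_zero.mpr (by exact_mod_cast hp1)
    simp only [localFactor, Nat.add_sub_cancel, hp, hp1, or_self, if_false]
    push_cast
    field_simp
    ring

lemma pFun_dvd_iff {m N : ℕ} (hN : N ≠ 0) : pFun m ∣ N ↔ (m.Prime → m ∈ N.primeFactors) := by
  unfold pFun
  split_ifs with hm <;> simp [hm, hN]

lemma pFun_dvd_mul_iff {m n r k : ℕ} (hnr : n ∣ r) (hr : r ≠ 0) (hk : k ≠ 0) :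
    pFun m ∣ n * k ↔ pFun m ∣ r * k ∧ m ∉ (r.primeFactors \ k.primeFactors) \ n.primeFactors := by
  have hn : n ≠ 0 := ne_zero_of_dvd_ne_zero hr hnr
  rw [pFun_dvd_iff (mul_ne_zero hn hk), pFun_dvd_iff (mul_ne_zero hr hk)]
  by_cases hm : m.Prime
  · have : m ∣ n → m ∣ r := fun h => h.trans hnr
    simp only [hm, Nat.mem_primeFactors, hm.dvd_mul, ne_eq, mul_eq_zero, hn, hk, hr, or_self,
      not_false_eq_true, and_true, true_and, forall_const, mem_sdiff, not_and, Decidable.not_not,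
      and_imp]
    tauto
  · simp [hm]

lemma SSj_succ_prod_mul_div_phij {j r k : ℕ} {s : Finset ℕ} (hr : r ≠ 0) (hk : k ≠ 0)
    (hs : s ⊆ r.primeFactors \ k.primeFactors) :
    SSj (j + 1) ((∏ p ∈ s, p) * k) / phij j (∏ p ∈ s, p)
      = ((if pFun (j + 1) ∣ r * k then 1 else 0) * Cj (j + 1)
          * ∏ p ∈ k.primeFactors, localFactor (j + 1) p)
        * ((∏ p ∈ s, localFactor (j + 1) p / ((p : ℝ) - j))
          * ∏ p ∈ (r.primeFactors \ k.primeFactors) \ s, if p = j + 1 then 0 else 1) := by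
  have hs_prime : ∀ p ∈ s, p.Prime := fun p hp =>
    Nat.prime_of_mem_primeFactors (mem_sdiff.mp (hs hp)).1
  have hs0 : ∏ p ∈ s, p ≠ 0 := prod_ne_zero_iff.mpr fun p hp => (hs_prime p hp).ne_zero
  have hsr : ∏ p ∈ s, p ∣ r := Finset.prod_primes_dvd r (fun p hp => (hs_prime p hp).prime)
    fun p hp => Nat.dvd_of_mem_primeFactors (mem_sdiff.mp (hs hp)).1
  have hpf : (∏ p ∈ s, p).primeFactors = s := Nat.primeFactors_prod hs_prime
  have hsk : Disjoint s k.primeFactors := (subset_sdiff.mp hs).2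
  have hind : (if pFun (j + 1) ∣ (∏ p ∈ s, p) * k then (1 : ℝ) else 0)
      = (if pFun (j + 1) ∣ r * k then 1 else 0)
        * if j + 1 ∈ (r.primeFactors \ k.primeFactors) \ s then 0 else 1 := by
    simp only [pFun_dvd_mul_iff hsr hr hk, hpf]
    split_ifs <;> simp_all
  rw [SSj_eq_ite_mul, hind, phij, Nat.primeFactors_mul hs0 hk, hpf, prod_union hsk,
    prod_ite_eq', prod_div_distrib]
  ring

theorem divisor_sum_singular_series_general (j : ℕ) (k r : ℕ) (hk : 0 < k)
    (hr : 0 < r) (hpk : pFun j ∣ k) :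
    ∑ d ∈ r.divisors.filter (fun d => Nat.Coprime d k),
      ((ArithmeticFunction.moebius d : ℤ) : ℝ) ^ 2 / phij j d * SSj (j + 1) (d * k)
      = SSj (j + 1) (r * k) := by
  set P := r.primeFactors \ k.primeFactors
  set c := (if pFun (j + 1) ∣ r * k then (1 : ℝ) else 0) * Cj (j + 1)
    * ∏ p ∈ k.primeFactors, localFactor (j + 1) p
  have hP : ∀ p ∈ P, p ≠ j := by
    rintro p hp rfl
    obtain ⟨hpr, hjk⟩ := mem_sdiff.mp hp
    exact hjk ((pFun_dvd_iff hk.ne').mp hpk (Nat.prime_of_mem_primeFactors hpr))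
  calc _ = ∑ s ∈ P.powerset, SSj (j + 1) ((∏ p ∈ s, p) * k) / phij j (∏ p ∈ s, p) := by
        simp_rw [div_mul_eq_mul_div, mul_div_assoc]
        exact Nat.sum_divisors_filter_coprime_moebius_sq_mul _ hr.ne' hk.ne'
    _ = ∑ s ∈ P.powerset, c * ((∏ p ∈ s, localFactor (j + 1) p / ((p : ℝ) - j))
          * ∏ p ∈ P \ s, if p = j + 1 then 0 else 1) :=
        sum_congr rfl fun s hs => SSj_succ_prod_mul_div_phij hr.ne' hk.ne' (mem_powerset.mp hs)
    _ = c * ∏ p ∈ P, localFactor (j + 1) p := by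
        rw [← mul_sum, ← prod_add]
        exact congrArg _ (prod_congr rfl fun p hp => localFactor_succ_div_add_ite (hP p hp))
    _ = SSj (j + 1) (r * k) := by
        rw [SSj_eq_ite_mul, Nat.primeFactors_mul hr.ne' hk.ne', ← sdiff_union_self_eq_union,
          prod_union sdiff_disjoint]
        ring

theorem divisor_sum_singular_series (j : ℕ) (hj1 : 1 ≤ j) (k r : ℕ) (hk : 0 < k)
    (hr : 0 < r) (hpk : pFun j ∣ k) :
    ∑ d ∈ r.divisors.filter (fun d => Nat.Coprime d k),
      ((ArithmeticFunction.moebius d : ℤ) : ℝ) ^ 2 / phij j d * SSj (j + 1) (d * k)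
      = SSj (j + 1) (r * k) :=
  divisor_sum_singular_series_general j k r hk hr hpk
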